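/- In the MAJSAT gadget built from a Boolean function φ on n ≥ 1 variables, the empty coordinate set is stochastically anchor-sufficient (some positive-probability state s has OptS_∅(s) a singleton) if and only if at least half of all assignments satisfy φ, i.e., 2·|{s ∈ S : φ(s) = true}| ≥ 2^n. -/

import Mathlib

/-- Full-information optimizer: actions maximizing pointwise utility at state `s`. -/
def Opt {n : ℕ} {A : Type*} {X : Fin n → Type*}
    (U : A → (∀ i, X i) → ℝ) (s : ∀ i, X i) : Set A :=
  {a | ∀ b, U b s ≤ U a s}

/-- Conditional (unnormalized) expected utility of action `a` over the `I`-fiber of `s`. -/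
noncomputable def condEU {n : ℕ} {A : Type*} {X : Fin n → Type*}
    [∀ i, Fintype (X i)] [∀ i, DecidableEq (X i)]
    (U : A → (∀ i, X i) → ℝ) (P : (∀ i, X i) → ℝ)
    (I : Finset (Fin n)) (s : ∀ i, X i) (a : A) : ℝ :=
  ∑ t ∈ Finset.univ.filter (fun t : ∀ i, X i => ∀ i ∈ I, t i = s i), P t * U a t

/-- Conditional optimizer: actions maximizing conditional expected utility on the `I`-fiber. -/
noncomputable def OptS {n : ℕ} {A : Type*} {X : Fin n → Type*}
    [∀ i, Fintype (X i)] [∀ i, DecidableEq (X i)]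
    (U : A → (∀ i, X i) → ℝ) (P : (∀ i, X i) → ℝ)
    (I : Finset (Fin n)) (s : ∀ i, X i) : Set A :=
  {a | ∀ b, condEU U P I s b ≤ condEU U P I s a}

/-- `I` is statically sufficient: states agreeing on `I` have the same optimizer. -/
def StaticSufficient {n : ℕ} {A : Type*} {X : Fin n → Type*}
    (U : A → (∀ i, X i) → ℝ) (I : Finset (Fin n)) : Prop :=
  ∀ s t : ∀ i, X i, (∀ i ∈ I, s i = t i) → Opt U s = Opt U t

/-- `I` is stochastically sufficient: the conditional optimizer agrees with the
full-information optimizer at every state. -/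
def StochSufficient {n : ℕ} {A : Type*} {X : Fin n → Type*}
    [∀ i, Fintype (X i)] [∀ i, DecidableEq (X i)]
    (U : A → (∀ i, X i) → ℝ) (P : (∀ i, X i) → ℝ) (I : Finset (Fin n)) : Prop :=
  ∀ s : ∀ i, X i, OptS U P I s = Opt U s

/-- `I` is stochastically decisive: every positive-probability state's observed fiber
has a unique conditional optimal action. -/
def StochDecisive {n : ℕ} {A : Type*} {X : Fin n → Type*}
    [∀ i, Fintype (X i)] [∀ i, DecidableEq (X i)]
    (U : A → (∀ i, X i) → ℝ) (P : (∀ i, X i) → ℝ) (I : Finset (Fin n)) : Prop :=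
  ∀ s : ∀ i, X i, 0 < P s → ∃ a : A, OptS U P I s = {a}


/-- The three actions of the MAJSAT gadget. -/
inductive GAct : Type
  | accept : GAct
  | holdL : GAct
  | holdR : GAct
deriving DecidableEq

instance : Fintype GAct where
  elems := {GAct.accept, GAct.holdL, GAct.holdR}
  complete := by intro x; cases x <;> simp

/-- Gadget utility: `accept` pays `1` on satisfying assignments and `0` otherwise;
both hold actions pay the constant `1/2 - 2^{-(n+1)}`. -/
noncomputable def gU (n : ℕ) (φ : (Fin n → Bool) → Bool) :
    GAct → (∀ _ : Fin n, Bool) → ℝ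
  | GAct.accept, s => if φ s then 1 else 0
  | GAct.holdL, _ => 1 / 2 - 1 / 2 ^ (n + 1)
  | GAct.holdR, _ => 1 / 2 - 1 / 2 ^ (n + 1)

/-- Uniform distribution on the Boolean cube. -/
noncomputable def gP (n : ℕ) : (∀ _ : Fin n, Bool) → ℝ := fun _ => 1 / 2 ^ n

/-!
Holding pays the constant `1/2 - 2^{-(n+1)}` whatever is observed, so `holdL` and `holdR` always
tie and neither can be the unique conditional optimizer. With nothing observed, `accept` has
expected utility `k / 2^n`, where `k` counts the satisfying assignments; it is the unique optimizer
exactly when it beats the hold value. Since `k / 2^n` is a multiple of `2^{-n}` and the hold value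
sits halfway between `1/2 - 2^{-n}` and `1/2`, this happens exactly when `k / 2^n ≥ 1/2`.
-/

section OptS

variable {n : ℕ} {A : Type*} {X : Fin n → Type*} [∀ i, Fintype (X i)] [∀ i, DecidableEq (X i)]

theorem condEU_empty (U : A → (∀ i, X i) → ℝ) (P : (∀ i, X i) → ℝ) (s : ∀ i, X i) (a : A) :
    condEU U P ∅ s a = ∑ t, P t * U a t := by
  simp [condEU]

theorem OptS_eq_singleton_iff (U : A → (∀ i, X i) → ℝ) (P : (∀ i, X i) → ℝ)
    (I : Finset (Fin n)) (s : ∀ i, X i) (a : A) :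
    OptS U P I s = {a} ↔ ∀ b, b ≠ a → condEU U P I s b < condEU U P I s a := by
  constructor
  · intro h b hba
    have ha : a ∈ OptS U P I s := h ▸ rfl
    refine (ha b).lt_of_ne fun hab => hba ?_
    have hb : b ∈ OptS U P I s := fun c => hab ▸ ha c
    simpa [h] using hb
  · intro h
    ext b
    simp only [OptS, Set.mem_ofPred_eq, Set.mem_singleton_iff]
    constructor
    · intro hb
      by_contra hba
      exact (hb a).not_gt (h b hba)
    · rintro rfl c
      by_cases hca : c = b
      · exact hca ▸ le_rfl
      · exact (h c hca).le

end OptS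

section Gadget

variable (n : ℕ) (φ : (Fin n → Bool) → Bool)

abbrev satCount : ℕ := (Finset.univ.filter fun s : Fin n → Bool => φ s = true).card

theorem condEU_gadget_accept (s : Fin n → Bool) :
    condEU (X := fun _ : Fin n => Bool) (gU n φ) (gP n) ∅ s GAct.accept
      = satCount n φ / 2 ^ n := by
  rw [condEU_empty]
  simp only [gU, gP, ← Finset.mul_sum, Finset.sum_boole]
  ring

theorem condEU_gadget_hold (s : Fin n → Bool) {a : GAct} (ha : a ≠ GAct.accept) :
    condEU (X := fun _ : Fin n => Bool) (gU n φ) (gP n) ∅ s a = 1 / 2 - 1 / 2 ^ (n + 1) := by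
  have hU : ∀ t, gU n φ a t = 1 / 2 - 1 / 2 ^ (n + 1) := by
    cases a <;> first | exact absurd rfl ha | exact fun _ => rfl
  rw [condEU_empty]
  simp only [hU, gP, Finset.sum_const, Finset.card_univ, Fintype.card_fun, Fintype.card_bool,
    Fintype.card_fin, nsmul_eq_mul]
  push_cast
  field_simp

theorem gadget_hold_lt_accept_iff :
    (1 / 2 - 1 / 2 ^ (n + 1) : ℝ) < satCount n φ / 2 ^ n ↔ 2 ^ n ≤ 2 * satCount n φ := by
  have hpos : (0 : ℝ) < 2 ^ (n + 1) := by positivity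
  have hhold : (1 / 2 - 1 / 2 ^ (n + 1) : ℝ) = (2 ^ n - 1) / 2 ^ (n + 1) := by
    field_simp; ring
  have haccept : (satCount n φ / 2 ^ n : ℝ) = 2 * satCount n φ / 2 ^ (n + 1) := by
    field_simp; ring
  rw [hhold, haccept, div_lt_div_iff_of_pos_right hpos, sub_lt_iff_lt_add, ← Nat.lt_succ_iff]
  exact_mod_cast Iff.rfl

theorem gadget_OptS_empty_eq_singleton_iff (s : Fin n → Bool) (a : GAct) :
    OptS (X := fun _ : Fin n => Bool) (gU n φ) (gP n) ∅ s = {a} ↔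
      a = GAct.accept ∧ 2 ^ n ≤ 2 * satCount n φ := by
  rw [OptS_eq_singleton_iff, ← gadget_hold_lt_accept_iff]
  constructor
  · intro h
    have ha : a = GAct.accept := by
      by_contra ha
      obtain ⟨b, hba, hb⟩ : ∃ b, b ≠ a ∧ b ≠ GAct.accept := by
        cases a with
        | accept => exact absurd rfl ha
        | holdL => exact ⟨.holdR, by decide, by decide⟩
        | holdR => exact ⟨.holdL, by decide, by decide⟩
      have := h b hba
      rw [condEU_gadget_hold n φ s hb, condEU_gadget_hold n φ s ha] at this
      exact this.false
    subst ha
    simpa [condEU_gadget_accept, condEU_gadget_hold] using h GAct.holdL (by decide)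
  · rintro ⟨rfl, hlt⟩ b hb
    rwa [condEU_gadget_accept, condEU_gadget_hold n φ s hb]

end Gadget

theorem majsat_gadget_anchor_sufficiency_general
    (n : ℕ) (φ : (Fin n → Bool) → Bool) :
    (∃ s : Fin n → Bool, 0 < gP n s ∧
        ∃ a : GAct, OptS (X := fun _ : Fin n => Bool) (gU n φ) (gP n) (∅ : Finset (Fin n)) s = {a}) ↔
      2 ^ n ≤ 2 * (Finset.univ.filter fun s : Fin n → Bool => φ s = true).card := by
  simp only [gadget_OptS_empty_eq_singleton_iff]
  exact ⟨fun ⟨_, _, _, _, h⟩ => h, fun h => ⟨fun _ => true, by unfold gP; positivity, _, rfl, h⟩⟩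

theorem majsat_gadget_anchor_sufficiency
    (n : ℕ) (hn : 1 ≤ n) (φ : (Fin n → Bool) → Bool) :
    (∃ s : Fin n → Bool, 0 < gP n s ∧
        ∃ a : GAct, OptS (X := fun _ : Fin n => Bool) (gU n φ) (gP n) (∅ : Finset (Fin n)) s = {a}) ↔
      2 ^ n ≤ 2 * (Finset.univ.filter fun s : Fin n → Bool => φ s = true).card :=
  majsat_gadget_anchor_sufficiency_general n φ
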